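/- arXiv:1507.00693 — 2 statements merged into one kernel-verified Lean document; each statement's English description precedes it below -/
import Mathlib

section
/- If n×n complex matrices X, Y and matrices v (n×r), w (r×n) satisfy [X,Y] + vw = -I, then for every k ≥ 0, tr(Y^k v w) = -tr(Y^k). -/
/-- If `[X,Y] + v*w = -1`, then `tr(Y^k v w) = -tr(Y^k)` for all `k ≥ 0`. -/
theorem stmt1 (n r : ℕ)
    (X Y : Matrix (Fin n) (Fin n) ℂ)
    (v : Matrix (Fin n) (Fin r) ℂ) (w : Matrix (Fin r) (Fin n) ℂ)
    (h : X * Y - Y * X + v * w = -1) :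
    ∀ k : ℕ, Matrix.trace (Y ^ k * v * w) = -Matrix.trace (Y ^ k) := by
  intro k
  have hvw : v * w = -1 - (X * Y - Y * X) := by
    rw [← h]; abel
  have : Y ^ k * v * w = Y ^ k * (v * w) := by rw [Matrix.mul_assoc]
  rw [this, hvw]
  have hcomm : Matrix.trace (Y ^ k * (X * Y)) = Matrix.trace (Y ^ k * (Y * X)) := by
    rw [show Y ^ k * (Y * X) = Y ^ (k+1) * X by rw [← Matrix.mul_assoc, ← pow_succ],
      ← Matrix.mul_assoc, Matrix.trace_mul_comm, ← Matrix.mul_assoc, ← pow_succ']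
  simp only [Matrix.mul_sub, Matrix.trace_sub, Matrix.mul_neg, Matrix.mul_one,
    Matrix.trace_neg, hcomm]
  ring
end

section
/- Let A be an r×r matrix of entire functions and B an r×r matrix of entire functions with det B ≡ 1. Suppose that for all indices i,r,s,j, the product A_{ir}(z) B_{sj}(z) is a polynomial (equivalently, A(z) e_{rs} B(z) is a polynomial matrix for all (r,s)). Then every entry of A is a polynomial. [Key step: for a fixed entry a(z) of A, a(z)B_{ij}(z) = p_{ij}(z) polynomial for all (i,j); taking determinants, a(z)^r = det(p_{ij}) is a polynomial, and an entire function whose r-th power is a polynomial is a polynomial.] -/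
open Polynomial Filter Topology

lemma entire_pow_const (r : ℕ) (hr : 0 < r) (f : ℂ → ℂ) (hf : Differentiable ℂ f)
    (c : ℂ) (h : ∀ z, f z ^ r = c) : ∃ p : Polynomial ℂ, ∀ z, f z = p.eval z := by
  have hb : Bornology.IsBounded (Set.range f) := by
    refine isBounded_iff_forall_norm_le.2 ⟨max 1 ‖c‖, ?_⟩
    rintro _ ⟨z, rfl⟩
    by_contra hlt
    push_neg at hlt
    have h1 : (1 : ℝ) ≤ ‖f z‖ := le_of_lt (lt_of_le_of_lt (le_max_left _ _) hlt)
    have h2 : ‖f z‖ ≤ ‖f z‖ ^ r := le_self_pow₀ h1 hr.ne'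
    rw [← norm_pow, h z] at h2
    exact absurd hlt (not_lt.2 (h2.trans (le_max_right _ _)))
  obtain ⟨d, hd⟩ := hf.exists_const_forall_eq_of_bounded hb
  exact ⟨Polynomial.C d, fun z => by simp [hd z]⟩

lemma entire_pow_poly (r : ℕ) (hr : 0 < r) :
    ∀ (n : ℕ) (P : Polynomial ℂ) (f : ℂ → ℂ), P.natDegree ≤ n → Differentiable ℂ f →
      (∀ z, f z ^ r = P.eval z) → ∃ p : Polynomial ℂ, ∀ z, f z = p.eval z := by
  intro n
  induction n with
  | zero =>
    intro P f hdeg hf hP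
    have : P = C (P.coeff 0) := Polynomial.eq_C_of_natDegree_le_zero hdeg
    refine entire_pow_const r hr f hf (P.coeff 0) fun z => ?_
    rw [hP z, this, eval_C, coeff_C_zero]
  | succ n ih =>
    intro P f hdeg hf hP
    by_cases hP0 : P = 0
    · refine ⟨0, fun z => ?_⟩
      have := hP z
      rw [hP0, eval_zero] at this
      simpa using pow_eq_zero_iff hr.ne' |>.1 this
    by_cases hroot : ∃ z0, P.eval z0 = 0
    · obtain ⟨z0, hz0⟩ := hroot
      have hfz0 : f z0 = 0 := by
        have := hP z0
        rw [hz0] at this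
        exact pow_eq_zero_iff hr.ne' |>.1 this
      set g := dslope f z0 with hgdef
      have hg : Differentiable ℂ g := by
        intro z
        rcases eq_or_ne z z0 with rfl | hz
        · obtain ⟨p, hp⟩ := hf.analyticAt z
          exact hp.has_fpower_series_dslope_fslope.analyticAt.differentiableAt
        · exact (differentiableAt_dslope_of_ne hz).2 (hf z)
      have hfg : ∀ z, f z = (z - z0) * g z := fun z => by
        have := sub_smul_dslope f z0 z
        rw [hfz0, sub_zero] at this
        simpa [smul_eq_mul] using this.symm
      obtain ⟨R, hPR, hndvd⟩ := P.exists_eq_pow_rootMultiplicity_mul_and_not_dvd hP0 z0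
      set m := P.rootMultiplicity z0 with hmdef
      have hR0 : R.eval z0 ≠ 0 := fun h => hndvd (dvd_iff_isRoot.2 h)
      have hm1 : 0 < m := (P.rootMultiplicity_pos hP0).2 hz0
      have key : ∀ z, (z - z0) ^ r * g z ^ r = (z - z0) ^ m * R.eval z := fun z => by
        rw [← mul_pow, ← hfg z, hP z, hPR]
        simp
      have hrm : r ≤ m := by
        by_contra hlt
        push_neg at hlt
        have h2 : Tendsto (fun z => (z - z0) ^ (r - m) * g z ^ r) (𝓝[≠] z0) (𝓝 0) := by
          have hc : Continuous fun z => (z - z0) ^ (r - m) * g z ^ r :=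
            ((continuous_id.sub continuous_const).pow _).mul (hg.continuous.pow r)
          have h3 : Tendsto (fun z => (z - z0) ^ (r - m) * g z ^ r) (𝓝[≠] z0)
              (𝓝 ((z0 - z0) ^ (r - m) * g z0 ^ r)) :=
            (hc.tendsto z0).mono_left nhdsWithin_le_nhds
          simpa [zero_pow (Nat.sub_ne_zero_of_lt hlt)] using h3
        have h1 : Tendsto (fun z => R.eval z) (𝓝[≠] z0) (𝓝 (R.eval z0)) :=
          Tendsto.mono_left (R.continuous.tendsto z0) nhdsWithin_le_nhds
        have heq : Tendsto (fun z => R.eval z) (𝓝[≠] z0) (𝓝 0) := by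
          refine h2.congr' ?_
          filter_upwards [self_mem_nhdsWithin] with z hz
          have hk := key z
          have hzne : (z - z0) ≠ 0 := sub_ne_zero.2 hz
          have : (z - z0) ^ m * ((z - z0) ^ (r - m) * g z ^ r)
              = (z - z0) ^ m * R.eval z := by
            rw [← mul_assoc, ← pow_add, ← hk]
            congr 2
            omega
          exact mul_left_cancel₀ (pow_ne_zero m hzne) this
        exact hR0 (tendsto_nhds_unique h1 heq)
      set Q := (X - C z0) ^ (m - r) * R with hQdef
      have hgQ : ∀ z, g z ^ r = Q.eval z := by
        have hne : ∀ z, z ≠ z0 → g z ^ r = Q.eval z := fun z hz => by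
          have hk := key z
          have : (z - z0) ^ r * g z ^ r = (z - z0) ^ r * ((z - z0) ^ (m - r) * R.eval z) := by
            rw [hk, ← mul_assoc, ← pow_add]
            congr 2
            omega
          have := mul_left_cancel₀ (pow_ne_zero r (sub_ne_zero.2 hz)) this
          simpa [hQdef] using this
        have hc1 : Continuous fun z => g z ^ r := hg.continuous.pow r
        have hc2 : Continuous fun z => Q.eval z := Q.continuous
        have hfun : (fun z => g z ^ r) = fun z => Q.eval z :=
          Continuous.ext_on (dense_compl_singleton z0) hc1 hc2 fun z hz => hne z hz
        exact fun z => congrFun hfun z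
      have hRne : R ≠ 0 := fun h => hR0 (by simp [h])
      have hdP : P.natDegree = m + R.natDegree := by
        rw [hPR, natDegree_mul (pow_ne_zero _ (X_sub_C_ne_zero z0)) hRne, natDegree_pow,
          natDegree_X_sub_C, mul_one]
      have hdQ : Q.natDegree = (m - r) + R.natDegree := by
        rw [hQdef, natDegree_mul (pow_ne_zero _ (X_sub_C_ne_zero z0)) hRne, natDegree_pow,
          natDegree_X_sub_C, mul_one]
      obtain ⟨q, hq⟩ := ih Q g (by omega) hg hgQ
      exact ⟨(X - C z0) * q, fun z => by rw [hfg z]; simp [hq z]⟩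
    · push_neg at hroot
      have hdeg0 : P.natDegree = 0 := by
        by_contra hne
        have hpos : 0 < P.degree := by
          rw [← Polynomial.natDegree_pos_iff_degree_pos]
          exact Nat.pos_of_ne_zero hne
        obtain ⟨z0, hz0⟩ := Complex.exists_root hpos
        exact hroot z0 hz0
      have : P = C (P.coeff 0) := Polynomial.eq_C_of_natDegree_le_zero hdeg0.le
      refine entire_pow_const r hr f hf (P.coeff 0) fun z => ?_
      rw [hP z, this, eval_C, coeff_C_zero]


/-- If `A`, `B` are entire `r×r` matrix functions with `det B ≡ 1`, and every
product `A_{ik}(z) B_{sj}(z)` of an entry of `A` with an entry of `B` is a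
polynomial, then every entry of `A` is a polynomial. -/
theorem stmt16 (r : ℕ) (hr : 0 < r)
    (A B : ℂ → Matrix (Fin r) (Fin r) ℂ)
    (hA : ∀ i j, Differentiable ℂ fun z => A z i j)
    (hB : ∀ i j, Differentiable ℂ fun z => B z i j)
    (hdet : ∀ z, (B z).det = 1)
    (hprod : ∀ i k s j, ∃ p : Polynomial ℂ, ∀ z, A z i k * B z s j = p.eval z) :
    ∀ i j, ∃ p : Polynomial ℂ, ∀ z, A z i j = p.eval z := by
  intro i j
  choose p hp using fun s t => hprod i j s t
  set P : Polynomial ℂ := (Matrix.of p).det with hPdef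
  have key : ∀ z, A z i j ^ r = P.eval z := by
    intro z
    have h2 : A z i j • B z = (Matrix.of p).map fun q => q.eval z := by
      ext s t
      simp [Matrix.smul_apply, smul_eq_mul, hp s t z]
    have h3 : ((Matrix.of p).map fun q => q.eval z).det = P.eval z := by
      have := (Polynomial.evalRingHom z).map_det (Matrix.of p)
      simpa [Polynomial.coe_evalRingHom] using this.symm
    calc A z i j ^ r = A z i j ^ r * (B z).det := by rw [hdet z, mul_one]
      _ = (A z i j • B z).det := by
          rw [Matrix.det_smul, Fintype.card_fin]
      _ = P.eval z := by rw [h2, h3]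
  exact entire_pow_poly r hr P.natDegree P _ le_rfl (hA i j) key
end
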